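/- Let N_{0} be a real number that is not an integer, n ≥ 2. Suppose v = q_1 e_1 + ⋯ + q_n e_n ∈ ℤⁿ, w is a permutation matrix with w^{-1}e_1 = e_r, and g = (x_{ij}) is upper triangular unipotent, such that N_0 e_1 = w g v. Then a contradiction follows; i.e., no such v, w, g exist. -/
import Mathlib


open Matrix

/-- If `N₀` is a non-integral real number, then there are no `v ∈ ℤⁿ`, permutation
matrix `w` and upper triangular unipotent `g` with `N₀ e₁ = w g v`. -/
theorem no_nonintegral_solution (n : ℕ) (hn : 2 ≤ n) (N₀ : ℝ)
    (hN₀ : ¬∃ m : ℤ, N₀ = (m : ℝ))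
    (v : Fin n → ℤ) (σ : Equiv.Perm (Fin n))
    (g : Matrix (Fin n) (Fin n) ℝ)
    (hg1 : ∀ i : Fin n, g i i = 1)
    (hg0 : ∀ i j : Fin n, j.val < i.val → g i j = 0)
    (h : (fun i : Fin n => if i = ⟨0, by omega⟩ then N₀ else 0)
        = (σ.permMatrix ℝ * g).mulVec (fun j => (v j : ℝ))) :
    False := by
  set r : Fin n := σ ⟨0, by omega⟩ with hr
  -- rewrite each component of h
  have hcomp : ∀ i : Fin n, (if i = ⟨0, by omega⟩ then N₀ else 0)
      = ∑ j, g (σ i) j * (v j : ℝ) := by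
    intro i
    have := congrFun h i
    rw [this, ← Matrix.mulVec_mulVec]
    simp [Matrix.mulVec, Equiv.Perm.permMatrix, PEquiv.toMatrix_apply, dotProduct,
      Equiv.toPEquiv_apply, Finset.sum_ite_eq, eq_comm]
  have hrowsum : ∀ k : Fin n, ∑ j, g k j * (v j : ℝ)
      = (v k : ℝ) + ∑ j ∈ Finset.Ioi k, g k j * (v j : ℝ) := by
    intro k
    have hsub : ∑ j, g k j * (v j : ℝ) = ∑ j ∈ Finset.Ici k, g k j * (v j : ℝ) := by
      refine (Finset.sum_subset (Finset.subset_univ _) ?_).symm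
      intro j _ hj
      have : j.val < k.val := by
        simp only [Finset.mem_Ici, not_le] at hj
        exact hj
      rw [hg0 k j this, zero_mul]
    rw [hsub, ← Finset.Ioi_insert, Finset.sum_insert (by simp), hg1 k, one_mul]
  -- rows other than r sum to zero
  have hrow0 : ∀ k : Fin n, k ≠ r → (v k : ℝ) + ∑ j ∈ Finset.Ioi k, g k j * (v j : ℝ) = 0 := by
    intro k hk
    have := hcomp (σ.symm k)
    rw [Equiv.apply_symm_apply] at this
    rw [if_neg, hrowsum] at this
    · exact this.symm
    · intro hc
      exact hk (by rw [hr, ← hc, Equiv.apply_symm_apply])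
  -- downward induction: v k = 0 for k > r
  have key : ∀ m : ℕ, ∀ k : Fin n, n ≤ k.val + m → r < k → (v k : ℝ) = 0 := by
    intro m
    induction m with
    | zero => intro k hk _; exact absurd hk (by omega)
    | succ m ih =>
      intro k hk hrk
      have hvk := hrow0 k (Fin.ne_of_gt hrk)
      have hz : ∑ j ∈ Finset.Ioi k, g k j * (v j : ℝ) = 0 := by
        apply Finset.sum_eq_zero
        intro j hj
        rw [Finset.mem_Ioi] at hj
        rw [ih j (by omega) (lt_trans hrk hj), mul_zero]
      rw [hz, add_zero] at hvk
      exact hvk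
  -- the r-th row gives N₀ = v r
  have hN : N₀ = (v r : ℝ) := by
    have := hcomp ⟨0, by omega⟩
    rw [if_pos rfl, ← hr, hrowsum] at this
    have hz : ∑ j ∈ Finset.Ioi r, g r j * (v j : ℝ) = 0 := by
      apply Finset.sum_eq_zero
      intro j hj
      rw [Finset.mem_Ioi] at hj
      rw [key n j (by omega) hj, mul_zero]
    rw [hz, add_zero] at this
    exact this
  exact hN₀ ⟨v r, hN⟩
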